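/- arXiv:2409.07206 — 9 statements merged into one kernel-verified Lean document; each statement's English description precedes it below -/
import Mathlib

section
/- The supremum over cuboids with fixed surface area k > 0 of the first Maxwell eigenvalue π²(1/ℓ₁² + 1/ℓ₂²) (where ℓ₁ ≥ ℓ₂ ≥ ℓ₃ > 0 and 2(ℓ₁ℓ₂ + ℓ₁ℓ₃ + ℓ₂ℓ₃) = k) equals +∞. -/
open Real Set Filter Topology

/-! Squeeze the cuboid to a thin rod `ℓ × t × t` of the given surface area: as `t → 0⁺` the
eigenvalue is at least `π² / t²`, which is unbounded. -/

noncomputable def rodLength (k t : ℝ) : ℝ := (k - 2 * t ^ 2) / (4 * t)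

lemma rod_surface_area {k t : ℝ} (ht : t ≠ 0) :
    2 * (rodLength k t * t + rodLength k t * t + t * t) = k := by
  unfold rodLength
  field_simp
  ring

lemma le_rodLength {k t : ℝ} (ht : 0 < t) (htk : 6 * t ^ 2 ≤ k) : t ≤ rodLength k t := by
  rw [rodLength, le_div_iff₀ (by positivity)]
  linarith

/-- the supremum over cuboids of fixed surface area k > 0 of the first
Maxwell eigenvalue is +∞, i.e. the set of eigenvalues is unbounded above. -/
theorem stmt6 (k : ℝ) (hk : 0 < k) :
    ¬ BddAbove {x : ℝ | ∃ ℓ₁ ℓ₂ ℓ₃ : ℝ, 0 < ℓ₃ ∧ ℓ₃ ≤ ℓ₂ ∧ ℓ₂ ≤ ℓ₁ ∧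
      2 * (ℓ₁ * ℓ₂ + ℓ₁ * ℓ₃ + ℓ₂ * ℓ₃) = k ∧
      x = Real.pi ^ 2 * (1 / ℓ₁ ^ 2 + 1 / ℓ₂ ^ 2)} := by
  rw [not_bddAbove_iff]
  intro M
  have hsmall : ∀ᶠ t in 𝓝[>] (0 : ℝ), 6 * t ^ 2 ≤ k := by
    have hcont : Tendsto (fun t : ℝ => 6 * t ^ 2) (𝓝 0) (𝓝 0) := by
      simpa using (show Continuous fun t : ℝ => 6 * t ^ 2 by fun_prop).tendsto 0
    exact nhdsWithin_le_nhds (hcont.eventually (ge_mem_nhds hk))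
  have hlarge : ∀ᶠ t in 𝓝[>] (0 : ℝ), M < π ^ 2 * t⁻¹ ^ 2 :=
    (((tendsto_pow_atTop two_ne_zero).comp tendsto_inv_nhdsGT_zero).const_mul_atTop
      (by positivity)).eventually_gt_atTop M
  obtain ⟨t, ht, htk, hM⟩ := (eventually_mem_nhdsWithin.and (hsmall.and hlarge)).exists
  rw [mem_Ioi] at ht
  refine ⟨_, ⟨rodLength k t, t, t, ht, le_rfl, le_rodLength ht htk,
    rod_surface_area ht.ne', rfl⟩, hM.trans_le ?_⟩
  rw [inv_pow, ← one_div]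
  gcongr
  exact le_add_of_nonneg_left (by positivity)
end

section
/- Let k > 0 and let ℓ₁ ≥ ℓ₂ ≥ ℓ₃ > 0 satisfy 2(ℓ₁ℓ₂ + ℓ₁ℓ₃ + ℓ₂ℓ₃) = k. Then π²(1/ℓ₁² + 1/ℓ₂²) > 4π²/k. -/
open Real

/-! Dropping the faces containing ℓ₃ from the surface area gives k > 2ℓ₁ℓ₂, so 4/k < 2/(ℓ₁ℓ₂),
and 2/(ℓ₁ℓ₂) ≤ 1/ℓ₁² + 1/ℓ₂² is AM–GM, i.e. (1/ℓ₁ - 1/ℓ₂)² ≥ 0. -/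

theorem two_div_mul_le_one_div_sq_add_one_div_sq (a b : ℝ) :
    2 / (a * b) ≤ 1 / a ^ 2 + 1 / b ^ 2 := by
  simp only [div_eq_mul_inv, one_mul, mul_inv, ← inv_pow]
  nlinarith [sq_nonneg (a⁻¹ - b⁻¹)]

theorem stmt7_general (k ℓ₁ ℓ₂ ℓ₃ : ℝ) (h₃ : 0 < ℓ₃) (h₃₂ : ℓ₃ ≤ ℓ₂)
    (h₂₁ : ℓ₂ ≤ ℓ₁) (hS : 2 * (ℓ₁ * ℓ₂ + ℓ₁ * ℓ₃ + ℓ₂ * ℓ₃) = k) :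
    4 * Real.pi ^ 2 / k < Real.pi ^ 2 * (1 / ℓ₁ ^ 2 + 1 / ℓ₂ ^ 2) := by
  have h₂ : 0 < ℓ₂ := h₃.trans_le h₃₂
  have h₁ : 0 < ℓ₁ := h₂.trans_le h₂₁
  have h₁₂ : 0 < ℓ₁ * ℓ₂ := mul_pos h₁ h₂
  have hface : 2 * (ℓ₁ * ℓ₂) < k := by
    rw [← hS]
    nlinarith [mul_pos (add_pos h₁ h₂) h₃]
  have hinv : 4 / k < 2 / (ℓ₁ * ℓ₂) := by
    rw [div_lt_div_iff₀ (by linarith) h₁₂]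
    linarith
  calc 4 * π ^ 2 / k = π ^ 2 * (4 / k) := by ring
    _ < π ^ 2 * (2 / (ℓ₁ * ℓ₂)) := by gcongr
    _ ≤ π ^ 2 * (1 / ℓ₁ ^ 2 + 1 / ℓ₂ ^ 2) := by
      gcongr
      exact two_div_mul_le_one_div_sq_add_one_div_sq ℓ₁ ℓ₂

/-- if ℓ₁ ≥ ℓ₂ ≥ ℓ₃ > 0 and 2(ℓ₁ℓ₂ + ℓ₁ℓ₃ + ℓ₂ℓ₃) = k then
π²(1/ℓ₁² + 1/ℓ₂²) > 4π²/k. -/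
theorem stmt7 (k ℓ₁ ℓ₂ ℓ₃ : ℝ) (hk : 0 < k) (h₃ : 0 < ℓ₃) (h₃₂ : ℓ₃ ≤ ℓ₂)
    (h₂₁ : ℓ₂ ≤ ℓ₁) (hS : 2 * (ℓ₁ * ℓ₂ + ℓ₁ * ℓ₃ + ℓ₂ * ℓ₃) = k) :
    4 * Real.pi ^ 2 / k < Real.pi ^ 2 * (1 / ℓ₁ ^ 2 + 1 / ℓ₂ ^ 2) :=
  stmt7_general k ℓ₁ ℓ₂ ℓ₃ h₃ h₃₂ h₂₁ hS
end

section
/- Let k > 0. Given ℓ₁, ℓ₃ > 0 with ℓ₃ℓ₁ < k/2, set ℓ₂ = (k/2 − ℓ₃ℓ₁)/(ℓ₃ + ℓ₁). Then 2(ℓ₁ℓ₂ + ℓ₁ℓ₃ + ℓ₂ℓ₃) = k, and the condition ℓ₃ ≤ ℓ₂ ≤ ℓ₁ holds if and only if √(ℓ₃² + k/2) − ℓ₃ ≤ ℓ₁ ≤ (k/2 − ℓ₃²)/(2ℓ₃) and 0 < ℓ₃ ≤ √(k/6). -/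
/-!
Clearing the positive denominator `ℓ₃ + ℓ₁` turns `ℓ₃ ≤ ℓ₂` into `ℓ₃² + 2ℓ₃ℓ₁ ≤ k/2` and `ℓ₂ ≤ ℓ₁`
into `ℓ₃² + k/2 ≤ (ℓ₁ + ℓ₃)²`. Together they force `ℓ₃ ≤ ℓ₁`, hence `3ℓ₃² ≤ k/2`.
-/

open Real

def cuboidSurfaceArea (ℓ₁ ℓ₂ ℓ₃ : ℝ) : ℝ := 2 * (ℓ₁ * ℓ₂ + ℓ₁ * ℓ₃ + ℓ₂ * ℓ₃)

/-- The side `ℓ₂` for which a cuboid with sides `ℓ₁, ℓ₂, ℓ₃` has surface area `k`. -/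
noncomputable def middleSide (k ℓ₁ ℓ₃ : ℝ) : ℝ := (k / 2 - ℓ₃ * ℓ₁) / (ℓ₃ + ℓ₁)

section

variable {k ℓ₁ ℓ₃ : ℝ}

theorem cuboidSurfaceArea_middleSide (hs : ℓ₃ + ℓ₁ ≠ 0) :
    cuboidSurfaceArea ℓ₁ (middleSide k ℓ₁ ℓ₃) ℓ₃ = k := by
  unfold cuboidSurfaceArea middleSide
  field_simp
  ring

theorem le_middleSide_iff (h₃ : 0 < ℓ₃) (hs : 0 < ℓ₃ + ℓ₁) :
    ℓ₃ ≤ middleSide k ℓ₁ ℓ₃ ↔ ℓ₁ ≤ (k / 2 - ℓ₃ ^ 2) / (2 * ℓ₃) := by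
  rw [middleSide, le_div_iff₀ hs, le_div_iff₀ (by positivity)]
  constructor <;> intro h <;> linarith

theorem middleSide_le_iff (hs : 0 < ℓ₃ + ℓ₁) :
    middleSide k ℓ₁ ℓ₃ ≤ ℓ₁ ↔ √(ℓ₃ ^ 2 + k / 2) - ℓ₃ ≤ ℓ₁ := by
  rw [middleSide, div_le_iff₀ hs, sub_le_iff_le_add, sub_le_iff_le_add, sqrt_le_left (by linarith)]
  constructor <;> intro h <;> linarith [add_sq ℓ₁ ℓ₃]

theorem le_sqrt_of_le_middleSide_le (h₃ : 0 < ℓ₃) (hs : 0 < ℓ₃ + ℓ₁)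
    (h₃₂ : ℓ₃ ≤ middleSide k ℓ₁ ℓ₃) (h₂₁ : middleSide k ℓ₁ ℓ₃ ≤ ℓ₁) : ℓ₃ ≤ √(k / 6) := by
  have h₃₁ : ℓ₃ * ℓ₃ ≤ ℓ₃ * ℓ₁ := mul_le_mul_of_nonneg_left (h₃₂.trans h₂₁) h₃.le
  rw [le_middleSide_iff h₃ hs, le_div_iff₀ (by positivity)] at h₃₂
  rw [le_sqrt' h₃]
  linarith

end

theorem stmt8_general (k ℓ₁ ℓ₃ : ℝ) (h₁ : 0 < ℓ₁) (h₃ : 0 < ℓ₃) :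
    2 * (ℓ₁ * ((k / 2 - ℓ₃ * ℓ₁) / (ℓ₃ + ℓ₁)) + ℓ₁ * ℓ₃ +
        ((k / 2 - ℓ₃ * ℓ₁) / (ℓ₃ + ℓ₁)) * ℓ₃) = k ∧
    ((ℓ₃ ≤ (k / 2 - ℓ₃ * ℓ₁) / (ℓ₃ + ℓ₁) ∧ (k / 2 - ℓ₃ * ℓ₁) / (ℓ₃ + ℓ₁) ≤ ℓ₁) ↔
      (Real.sqrt (ℓ₃ ^ 2 + k / 2) - ℓ₃ ≤ ℓ₁ ∧ ℓ₁ ≤ (k / 2 - ℓ₃ ^ 2) / (2 * ℓ₃) ∧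
        ℓ₃ ≤ Real.sqrt (k / 6))) := by
  have hs : 0 < ℓ₃ + ℓ₁ := by positivity
  refine ⟨cuboidSurfaceArea_middleSide hs.ne', ?_⟩
  change ℓ₃ ≤ middleSide k ℓ₁ ℓ₃ ∧ middleSide k ℓ₁ ℓ₃ ≤ ℓ₁ ↔ _
  constructor
  · rintro ⟨h₃₂, h₂₁⟩
    exact ⟨(middleSide_le_iff hs).1 h₂₁, (le_middleSide_iff h₃ hs).1 h₃₂,
      le_sqrt_of_le_middleSide_le h₃ hs h₃₂ h₂₁⟩
  · rintro ⟨h₂₁, h₃₂, -⟩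
    exact ⟨(le_middleSide_iff h₃ hs).2 h₃₂, (middleSide_le_iff hs).2 h₂₁⟩

/-- with ℓ₂ = (k/2 − ℓ₃ℓ₁)/(ℓ₃ + ℓ₁), the surface area is k, and
ℓ₃ ≤ ℓ₂ ≤ ℓ₁ iff √(ℓ₃² + k/2) − ℓ₃ ≤ ℓ₁ ≤ (k/2 − ℓ₃²)/(2ℓ₃) and ℓ₃ ≤ √(k/6). -/
theorem stmt8 (k ℓ₁ ℓ₃ : ℝ) (hk : 0 < k) (h₁ : 0 < ℓ₁) (h₃ : 0 < ℓ₃)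
    (hlt : ℓ₃ * ℓ₁ < k / 2) :
    2 * (ℓ₁ * ((k / 2 - ℓ₃ * ℓ₁) / (ℓ₃ + ℓ₁)) + ℓ₁ * ℓ₃ +
        ((k / 2 - ℓ₃ * ℓ₁) / (ℓ₃ + ℓ₁)) * ℓ₃) = k ∧
    ((ℓ₃ ≤ (k / 2 - ℓ₃ * ℓ₁) / (ℓ₃ + ℓ₁) ∧ (k / 2 - ℓ₃ * ℓ₁) / (ℓ₃ + ℓ₁) ≤ ℓ₁) ↔
      (Real.sqrt (ℓ₃ ^ 2 + k / 2) - ℓ₃ ≤ ℓ₁ ∧ ℓ₁ ≤ (k / 2 - ℓ₃ ^ 2) / (2 * ℓ₃) ∧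
        ℓ₃ ≤ Real.sqrt (k / 6))) :=
  stmt8_general k ℓ₁ ℓ₃ h₁ h₃
end

section
/- The infimum of π²(1/ℓ₁² + 1/ℓ₂²) over all triples ℓ₁ ≥ ℓ₂ ≥ ℓ₃ > 0 with 2(ℓ₁ℓ₂ + ℓ₁ℓ₃ + ℓ₂ℓ₃) = k equals 4π²/k, and it is not attained. -/
/-!
Since `1/a² + 1/b² ≥ 2/(ab)` and the surface area `k = 2ab + 2c(a + b)` exceeds `2ab`, every
value lies strictly above `4π²/k`. Conversely, boxes with a square face `a × a` of area `s < k/2`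
and height `c = (k/2 - s)/(2a)` have eigenvalue `2π²/s`, which tends to `4π²/k` as the box
flattens (`s → k/2`, `c → 0`).
-/

open Real Set

def cuboidFirstMaxwellEigenvalues (k : ℝ) : Set ℝ :=
  {x : ℝ | ∃ ℓ₁ ℓ₂ ℓ₃ : ℝ, 0 < ℓ₃ ∧ ℓ₃ ≤ ℓ₂ ∧ ℓ₂ ≤ ℓ₁ ∧
    2 * (ℓ₁ * ℓ₂ + ℓ₁ * ℓ₃ + ℓ₂ * ℓ₃) = k ∧ x = π ^ 2 * (1 / ℓ₁ ^ 2 + 1 / ℓ₂ ^ 2)}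

lemma four_div_surfaceArea_lt_inv_sq_add_inv_sq {a b c : ℝ} (ha : 0 < a) (hb : 0 < b)
    (hc : 0 < c) : 4 / (2 * (a * b + a * c + b * c)) < 1 / a ^ 2 + 1 / b ^ 2 :=
  calc 4 / (2 * (a * b + a * c + b * c))
      < 4 / (2 * (a * b)) := by gcongr; nlinarith [mul_pos (add_pos ha hb) hc]
    _ = 2 / (a * b) := by field_simp; ring
    _ ≤ 1 / a ^ 2 + 1 / b ^ 2 := by
      rw [div_add_div _ _ (by positivity) (by positivity), div_le_div_iff₀ (by positivity)
        (by positivity)]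
      nlinarith [sq_nonneg (a - b), mul_pos ha hb]

lemma lt_of_mem_cuboidFirstMaxwellEigenvalues {k x : ℝ}
    (hx : x ∈ cuboidFirstMaxwellEigenvalues k) : 4 * π ^ 2 / k < x := by
  obtain ⟨a, b, c, hc, hcb, hba, rfl, rfl⟩ := hx
  have hb : 0 < b := hc.trans_le hcb
  rw [mul_comm 4, mul_div_assoc]
  exact mul_lt_mul_of_pos_left
    (four_div_surfaceArea_lt_inv_sq_add_inv_sq (hb.trans_le hba) hb hc) (by positivity)

lemma exists_square_cuboid_of_surfaceArea {k s : ℝ} (hs : k / 6 ≤ s) (hsk : s < k / 2) :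
    ∃ a c : ℝ, 0 < c ∧ c ≤ a ∧ 2 * (a * a + a * c + a * c) = k ∧ a ^ 2 = s := by
  have hs0 : 0 < s := by linarith
  have ha : 0 < √s := sqrt_pos.mpr hs0
  have ha2 : √s ^ 2 = s := sq_sqrt hs0.le
  refine ⟨√s, (k / 2 - s) / (2 * √s), by positivity, ?_, ?_, ha2⟩
  · rw [div_le_iff₀ (by positivity)]
    nlinarith
  · field_simp
    nlinarith

lemma Ioo_subset_cuboidFirstMaxwellEigenvalues {k : ℝ} (hk : 0 < k) :
    Ioo (4 * π ^ 2 / k) (12 * π ^ 2 / k) ⊆ cuboidFirstMaxwellEigenvalues k := by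
  rintro x ⟨hlo, hhi⟩
  have hx : 0 < x := lt_trans (by positivity) hlo
  have hπ : 0 < π ^ 2 := by positivity
  rw [div_lt_iff₀ hk] at hlo
  rw [lt_div_iff₀ hk] at hhi
  obtain ⟨a, c, hc, hca, hsum, ha2⟩ :=
    exists_square_cuboid_of_surfaceArea (k := k) (s := 2 * π ^ 2 / x)
      (by rw [le_div_iff₀ hx]; nlinarith) (by rw [div_lt_iff₀ hx]; nlinarith)
  refine ⟨a, a, c, hc, hca, le_rfl, hsum, ?_⟩
  rw [ha2]
  field_simp
  ring

/-- the infimum of π²(1/ℓ₁² + 1/ℓ₂²) over triples ℓ₁ ≥ ℓ₂ ≥ ℓ₃ > 0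
with surface area k equals 4π²/k, and it is not attained. -/
theorem stmt10 (k : ℝ) (hk : 0 < k) :
    IsGLB {x : ℝ | ∃ ℓ₁ ℓ₂ ℓ₃ : ℝ, 0 < ℓ₃ ∧ ℓ₃ ≤ ℓ₂ ∧ ℓ₂ ≤ ℓ₁ ∧
        2 * (ℓ₁ * ℓ₂ + ℓ₁ * ℓ₃ + ℓ₂ * ℓ₃) = k ∧
        x = Real.pi ^ 2 * (1 / ℓ₁ ^ 2 + 1 / ℓ₂ ^ 2)} (4 * Real.pi ^ 2 / k) ∧
    4 * Real.pi ^ 2 / k ∉ {x : ℝ | ∃ ℓ₁ ℓ₂ ℓ₃ : ℝ, 0 < ℓ₃ ∧ ℓ₃ ≤ ℓ₂ ∧ ℓ₂ ≤ ℓ₁ ∧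
        2 * (ℓ₁ * ℓ₂ + ℓ₁ * ℓ₃ + ℓ₂ * ℓ₃) = k ∧
        x = Real.pi ^ 2 * (1 / ℓ₁ ^ 2 + 1 / ℓ₂ ^ 2)} := by
  change IsGLB (cuboidFirstMaxwellEigenvalues k) _ ∧ _ ∉ cuboidFirstMaxwellEigenvalues k
  have hlt : 4 * π ^ 2 / k < 12 * π ^ 2 / k := by gcongr; norm_num
  refine ⟨(isGLB_Ioo hlt).of_subset_of_superset isGLB_Ioi
    (Ioo_subset_cuboidFirstMaxwellEigenvalues hk)
    (fun _ ↦ lt_of_mem_cuboidFirstMaxwellEigenvalues),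
    fun h ↦ (lt_of_mem_cuboidFirstMaxwellEigenvalues h).false⟩
end

section
/- For ℓ₁ ≥ ℓ₂ ≥ ℓ₃ > 0 with ℓ₂ = (k/2 − ℓ₃ℓ₁)/(ℓ₃ + ℓ₁), one has π²(1/ℓ₁² + (ℓ₃ + ℓ₁)²/(k/2 − ℓ₃ℓ₁)²) ≥ 2π²(ℓ₃ + ℓ₁)/(ℓ₁(k/2 − ℓ₃ℓ₁)) > 4π²/k. -/
open Real

theorem two_mul_div_mul_le_one_div_sq_add_div_sq {α : Type*} [Field α] [LinearOrder α]
    [IsStrictOrderedRing α] (a b s : α) :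
    2 * s / (a * b) ≤ 1 / a ^ 2 + s ^ 2 / b ^ 2 :=
  calc 2 * s / (a * b) = 2 * (1 / a) * (s / b) := by ring
    _ ≤ (1 / a) ^ 2 + (s / b) ^ 2 := two_mul_le_add_sq _ _
    _ = 1 / a ^ 2 + s ^ 2 / b ^ 2 := by ring

theorem four_div_lt_two_mul_add_div_mul_sub {k a c : ℝ} (hk : 0 < k) (ha : 0 < a) (hc : 0 < c)
    (hlt : c * a < k / 2) :
    4 / k < 2 * (c + a) / (a * (k / 2 - c * a)) := by
  have hd : 0 < k / 2 - c * a := sub_pos.mpr hlt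
  rw [div_lt_div_iff₀ hk (mul_pos ha hd)]
  nlinarith [mul_pos hc hk, mul_pos hc (mul_pos ha ha)]

theorem stmt11_general (k ℓ₁ ℓ₂ ℓ₃ : ℝ) (hk : 0 < k) (h₃ : 0 < ℓ₃) (h₃₂ : ℓ₃ ≤ ℓ₂)
    (h₂₁ : ℓ₂ ≤ ℓ₁) (hlt : ℓ₃ * ℓ₁ < k / 2) :
    2 * Real.pi ^ 2 * (ℓ₃ + ℓ₁) / (ℓ₁ * (k / 2 - ℓ₃ * ℓ₁)) ≤
      Real.pi ^ 2 * (1 / ℓ₁ ^ 2 + (ℓ₃ + ℓ₁) ^ 2 / (k / 2 - ℓ₃ * ℓ₁) ^ 2) ∧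
    4 * Real.pi ^ 2 / k < 2 * Real.pi ^ 2 * (ℓ₃ + ℓ₁) / (ℓ₁ * (k / 2 - ℓ₃ * ℓ₁)) := by
  have h₁ : 0 < ℓ₁ := h₃.trans_le (h₃₂.trans h₂₁)
  have hpi : 0 < π ^ 2 := by positivity
  have factor_pi : 2 * π ^ 2 * (ℓ₃ + ℓ₁) / (ℓ₁ * (k / 2 - ℓ₃ * ℓ₁)) =
      π ^ 2 * (2 * (ℓ₃ + ℓ₁) / (ℓ₁ * (k / 2 - ℓ₃ * ℓ₁))) := by ring
  rw [factor_pi]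
  constructor
  · exact mul_le_mul_of_nonneg_left (two_mul_div_mul_le_one_div_sq_add_div_sq _ _ _) hpi.le
  · calc 4 * π ^ 2 / k = π ^ 2 * (4 / k) := by ring
      _ < _ := mul_lt_mul_of_pos_left (four_div_lt_two_mul_add_div_mul_sub hk h₁ h₃ hlt) hpi

/-- the Young-inequality step:
π²(1/ℓ₁² + (ℓ₃+ℓ₁)²/(k/2 − ℓ₃ℓ₁)²) ≥ 2π²(ℓ₃+ℓ₁)/(ℓ₁(k/2 − ℓ₃ℓ₁)) > 4π²/k. -/
theorem stmt11 (k ℓ₁ ℓ₂ ℓ₃ : ℝ) (hk : 0 < k) (h₃ : 0 < ℓ₃) (h₃₂ : ℓ₃ ≤ ℓ₂)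
    (h₂₁ : ℓ₂ ≤ ℓ₁) (hlt : ℓ₃ * ℓ₁ < k / 2)
    (h₂ : ℓ₂ = (k / 2 - ℓ₃ * ℓ₁) / (ℓ₃ + ℓ₁)) :
    2 * Real.pi ^ 2 * (ℓ₃ + ℓ₁) / (ℓ₁ * (k / 2 - ℓ₃ * ℓ₁)) ≤
      Real.pi ^ 2 * (1 / ℓ₁ ^ 2 + (ℓ₃ + ℓ₁) ^ 2 / (k / 2 - ℓ₃ * ℓ₁) ^ 2) ∧
    4 * Real.pi ^ 2 / k < 2 * Real.pi ^ 2 * (ℓ₃ + ℓ₁) / (ℓ₁ * (k / 2 - ℓ₃ * ℓ₁)) :=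
  stmt11_general k ℓ₁ ℓ₂ ℓ₃ hk h₃ h₃₂ h₂₁ hlt
end

section
/- Let a₁ be as above with 2.7436 < a₁ < 2.7438, and let k > 0. The ball of volume k has radius R = (3k/(4π))^(1/3) and first Maxwell eigenvalue a₁² (16π²/(9k²))^(1/3), which is strictly less than 2π²/k^(2/3), the first Maxwell eigenvalue of the cube of volume k. -/
/-!
Multiplying by `k ^ (2/3)` and cubing removes every fractional power: the ball's eigenvalue is
below the cube's exactly when `a₁ ^ 6 < 9 π ^ 4 / 2`, and this holds with room to spare since
`2.7438 ^ 6 ≈ 426 < 438 ≈ 9 π ^ 4 / 2`.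
-/

open Real

lemma div_rpow_sq_eq_mul_inv_sq_rpow (a : ℝ) {x : ℝ} (hx : 0 ≤ x) (r : ℝ) :
    (a / x ^ r) ^ 2 = a ^ 2 * ((x ^ 2)⁻¹) ^ r := by
  rw [div_pow, rpow_pow_comm hx, inv_rpow (by positivity), div_eq_mul_inv]

lemma ball_radius_sq_inv (k : ℝ) :
    ((3 * k / (4 * π)) ^ 2)⁻¹ = 16 * π ^ 2 / (9 * k ^ 2) := by
  field_simp
  ring

lemma rpow_one_third_pow_three {c : ℝ} (hc : 0 ≤ c) : (c ^ ((1 : ℝ) / 3)) ^ 3 = c := by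
  rw [one_div]
  exact rpow_inv_natCast_pow hc three_ne_zero

lemma mul_rpow_one_third_lt_iff {a b c : ℝ} (hb : 0 ≤ b) (hc : 0 ≤ c) :
    a ^ 2 * c ^ ((1 : ℝ) / 3) < b ↔ a ^ 6 * c < b ^ 3 := by
  rw [← pow_lt_pow_iff_left₀ (by positivity) hb three_ne_zero, mul_pow,
    rpow_one_third_pow_three hc, ← pow_mul]

lemma ball_eigenvalue_lt_cube_eigenvalue_iff (a : ℝ) {k : ℝ} (hk : 0 < k) :
    a ^ 2 * (16 * π ^ 2 / (9 * k ^ 2)) ^ ((1 : ℝ) / 3) < 2 * π ^ 2 / k ^ ((2 : ℝ) / 3) ↔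
      a ^ 6 < 9 * π ^ 4 / 2 := by
  have hk_rpow : k ^ ((2 : ℝ) / 3) = (k ^ 2) ^ ((1 : ℝ) / 3) := by
    rw [← rpow_natCast_mul hk.le]
    norm_num
  have hk_cancel : 16 * π ^ 2 / (9 * k ^ 2) * k ^ 2 = 16 * π ^ 2 / 9 := by field_simp
  have hπ_cube : (2 * π ^ 2) ^ 3 = 9 * π ^ 4 / 2 * (16 * π ^ 2 / 9) := by ring
  rw [lt_div_iff₀ (by positivity), hk_rpow, mul_assoc, ← mul_rpow (by positivity) (by positivity),
    hk_cancel, mul_rpow_one_third_lt_iff (by positivity) (by positivity), hπ_cube,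
    mul_lt_mul_iff_left₀ (by positivity)]

lemma pow_six_lt_nine_mul_pi_pow_four_div_two {a : ℝ} (ha₀ : 0 ≤ a) (ha : a < 2.7438) :
    a ^ 6 < 9 * π ^ 4 / 2 := by
  have ha_pow : a ^ 6 < 2.7438 ^ 6 := pow_lt_pow_left₀ ha ha₀ (by norm_num)
  have hπ_pow : (3.141592 : ℝ) ^ 4 < π ^ 4 := pow_lt_pow_left₀ pi_gt_d6 (by norm_num) (by norm_num)
  linarith

/-- with 2.7436 < a₁ < 2.7438 and k > 0, the ball of volume k has radius
R = (3k/(4π))^(1/3), first Maxwell eigenvalue (a₁/R)² = a₁²(16π²/(9k²))^(1/3), and this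
is strictly smaller than 2π²/k^(2/3), the eigenvalue of the cube of volume k. -/
theorem stmt13 (a₁ k : ℝ) (ha : 2.7436 < a₁) (ha' : a₁ < 2.7438) (hk : 0 < k) :
    (a₁ / (3 * k / (4 * Real.pi)) ^ ((1:ℝ)/3)) ^ 2
      = a₁ ^ 2 * (16 * Real.pi ^ 2 / (9 * k ^ 2)) ^ ((1:ℝ)/3) ∧
    a₁ ^ 2 * (16 * Real.pi ^ 2 / (9 * k ^ 2)) ^ ((1:ℝ)/3)
      < 2 * Real.pi ^ 2 / k ^ ((2:ℝ)/3) := by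
  refine ⟨?_, ?_⟩
  · rw [div_rpow_sq_eq_mul_inv_sq_rpow a₁ (by positivity), ball_radius_sq_inv]
  · rw [ball_eigenvalue_lt_cube_eigenvalue_iff a₁ hk]
    exact pow_six_lt_nine_mul_pi_pow_four_div_two (by linarith) ha'
end

section
/- With c = (η + 2δ)/(ηδ + 2) and 0 < η < δ < 1, the Dirichlet energy of the test function u on ω_{δ,η} equals (η/δ)(1/δ + c)² and satisfies (η/δ)(1/δ + c)² = O(η/δ³) as δ → 0 (e.g., it is at most 4η/δ³ for δ small). -/
/-! The energy identity is pure algebra. For the bound, `(η + 2δ)/(ηδ + 2) ≤ 1/δ` amounts to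
`δ² ≤ 1`, so the slope is at most `2/δ²` and the energy at most `ηδ · 4/δ⁴ = 4η/δ³`; any
`δ₀ ≤ 1` works. -/

lemma mul_mul_one_div_mul_sq (η a : ℝ) {δ : ℝ} (hδ : δ ≠ 0) :
    η * δ * ((1 / δ) * a) ^ 2 = (η / δ) * a ^ 2 := by
  field_simp

lemma add_two_mul_div_le_one_div {η δ : ℝ} (hη : 0 ≤ η) (hδ : 0 < δ) (hδ₁ : δ ≤ 1) :
    (η + 2 * δ) / (η * δ + 2) ≤ 1 / δ := by
  rw [div_le_div_iff₀ (by positivity) hδ]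
  nlinarith [mul_le_mul_of_nonneg_left hδ₁ hδ.le]

lemma div_mul_one_div_add_sq_le {η δ : ℝ} (hη : 0 ≤ η) (hδ : 0 < δ) (hδ₁ : δ ≤ 1) :
    (η / δ) * (1 / δ + (η + 2 * δ) / (η * δ + 2)) ^ 2 ≤ 4 * η / δ ^ 3 := by
  have hslope : 1 / δ + (η + 2 * δ) / (η * δ + 2) ≤ 2 / δ :=
    calc 1 / δ + (η + 2 * δ) / (η * δ + 2)
        ≤ 1 / δ + 1 / δ := add_le_add_right (add_two_mul_div_le_one_div hη hδ hδ₁) _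
      _ = 2 / δ := by ring
  calc (η / δ) * (1 / δ + (η + 2 * δ) / (η * δ + 2)) ^ 2
      ≤ (η / δ) * (2 / δ) ^ 2 := by gcongr
    _ = 4 * η / δ ^ 3 := by field_simp; ring

/-- with c = (η + 2δ)/(ηδ + 2), the Dirichlet energy of the test
function equals the channel area η·δ times the slope squared, i.e. (η/δ)(1/δ + c)²,
and it is O(η/δ³) as δ → 0: e.g. it is at most 4η/δ³ for δ small. -/
theorem stmt15 :
    (∀ δ η : ℝ, 0 < η → η < δ → δ < 1 →
      η * δ * ((1 / δ) * (1 / δ + (η + 2 * δ) / (η * δ + 2))) ^ 2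
        = (η / δ) * (1 / δ + (η + 2 * δ) / (η * δ + 2)) ^ 2) ∧
    (∃ δ₀ : ℝ, 0 < δ₀ ∧ ∀ δ η : ℝ, 0 < η → η < δ → δ < δ₀ →
      (η / δ) * (1 / δ + (η + 2 * δ) / (η * δ + 2)) ^ 2 ≤ 4 * η / δ ^ 3) := by
  refine ⟨fun δ η hη hηδ _ => mul_mul_one_div_mul_sq η _ (hη.trans hηδ).ne', 1, one_pos, ?_⟩
  intro δ η hη hηδ hδ
  exact div_mul_one_div_add_sq_le hη.le (hη.trans hηδ) hδ.le
end

section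
/- With c = (η + 2δ)/(ηδ + 2) and 0 < η < δ < 1, the L² norm squared of the test function u on ω_{δ,η} equals c² + 1 + (η/(3δ))(1 − cδ + c²δ²), and if η/δ → 0 as δ → 0 then this tends to 1. -/
open Real Filter Set intervalIntegral

open scoped Topology

theorem integral_sub_mul_sq (c m a b : ℝ) :
    ∫ x in a..b, (c - m * x) ^ 2 =
      (c ^ 2 * b - m * c * b ^ 2 + m ^ 2 * b ^ 3 / 3) -
        (c ^ 2 * a - m * c * a ^ 2 + m ^ 2 * a ^ 3 / 3) := by
  have hderiv : ∀ x ∈ uIcc a b,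
      HasDerivAt (fun x => c ^ 2 * x - m * c * x ^ 2 + m ^ 2 * x ^ 3 / 3) ((c - m * x) ^ 2) x := by
    intro x _
    refine ((((hasDerivAt_id x).const_mul (c ^ 2)).sub
        ((hasDerivAt_pow 2 x).const_mul (m * c))).add
      (((hasDerivAt_pow 3 x).const_mul (m ^ 2)).div_const 3)).congr_deriv ?_
    push_cast
    ring
  exact integral_eq_sub_of_hasDerivAt hderiv (Continuous.intervalIntegrable (by fun_prop) a b)

/-- The three terms on the left are the contributions of `G`, of `G_δ` and of the channel
`S_{δ,η}`. -/
theorem test_function_norm_sq_eq (c δ η : ℝ) (hδ : δ ≠ 0) :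
    c ^ 2 * 1 + (1 / δ) ^ 2 * δ ^ 2 + η * ∫ x in (0:ℝ)..δ, (c - (1 / δ) * (1 / δ + c) * x) ^ 2 =
      c ^ 2 + 1 + (η / (3 * δ)) * (1 - c * δ + c ^ 2 * δ ^ 2) := by
  rw [integral_sub_mul_sq]
  field_simp
  ring

theorem tendsto_of_tendsto_div_self {η : ℝ → ℝ} (h : Tendsto (fun δ => η δ / δ) (𝓝[>] 0) (𝓝 0)) :
    Tendsto η (𝓝[>] 0) (𝓝 0) := by
  have hprod := h.mul (tendsto_nhdsWithin_of_tendsto_nhds (tendsto_id (x := 𝓝 (0:ℝ))))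
  rw [zero_mul] at hprod
  refine hprod.congr' ?_
  filter_upwards [self_mem_nhdsWithin] with δ (hδ : 0 < δ)
  exact div_mul_cancel₀ _ hδ.ne'

theorem tendsto_test_function_norm_sq {α : Type*} {l : Filter α} {c δ q : α → ℝ}
    (hc : Tendsto c l (𝓝 0)) (hδ : Tendsto δ l (𝓝 0)) (hq : Tendsto q l (𝓝 0)) :
    Tendsto (fun t => c t ^ 2 + 1 + q t * (1 - c t * δ t + c t ^ 2 * δ t ^ 2)) l (𝓝 1) := by
  simpa using ((hc.pow 2).add_const 1).add
    (hq.mul (((hc.mul hδ).const_sub 1).add ((hc.pow 2).mul (hδ.pow 2))))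

/-- with c = (η + 2δ)/(ηδ + 2), the squared L² norm of the test function
equals c² + 1 + (η/(3δ))(1 − cδ + c²δ²); if η/δ → 0 as δ → 0⁺ then it tends to 1. -/
theorem stmt16 :
    (∀ δ η : ℝ, 0 < η → η < δ → δ < 1 →
      ((η + 2 * δ) / (η * δ + 2)) ^ 2 * 1 + (1 / δ) ^ 2 * δ ^ 2 +
        η * ∫ x in (0:ℝ)..δ,
          ((η + 2 * δ) / (η * δ + 2) -
            (1 / δ) * (1 / δ + (η + 2 * δ) / (η * δ + 2)) * x) ^ 2
      = ((η + 2 * δ) / (η * δ + 2)) ^ 2 + 1 +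
        (η / (3 * δ)) * (1 - ((η + 2 * δ) / (η * δ + 2)) * δ +
          ((η + 2 * δ) / (η * δ + 2)) ^ 2 * δ ^ 2)) ∧
    (∀ η : ℝ → ℝ, (∀ δ ∈ Set.Ioo (0:ℝ) 1, 0 < η δ ∧ η δ < δ) →
      Tendsto (fun δ => η δ / δ) (nhdsWithin 0 (Set.Ioi 0)) (nhds 0) →
      Tendsto (fun δ =>
          ((η δ + 2 * δ) / (η δ * δ + 2)) ^ 2 + 1 +
            (η δ / (3 * δ)) * (1 - ((η δ + 2 * δ) / (η δ * δ + 2)) * δ +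
              ((η δ + 2 * δ) / (η δ * δ + 2)) ^ 2 * δ ^ 2))
        (nhdsWithin 0 (Set.Ioi 0)) (nhds 1)) := by
  refine ⟨fun δ η hη hηδ _ => test_function_norm_sq_eq _ δ η (hη.trans hηδ).ne', ?_⟩
  intro η _ hratio
  have hδ : Tendsto id (𝓝[>] (0:ℝ)) (𝓝 0) := tendsto_nhdsWithin_of_tendsto_nhds tendsto_id
  have hη := tendsto_of_tendsto_div_self hratio
  have hc : Tendsto (fun δ => (η δ + 2 * δ) / (η δ * δ + 2)) (𝓝[>] 0) (𝓝 0) := by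
    simpa [Pi.div_def] using (hη.add (hδ.const_mul 2)).div ((hη.mul hδ).add_const 2) (by norm_num)
  have hq : Tendsto (fun δ => η δ / (3 * δ)) (𝓝[>] 0) (𝓝 0) := by
    simpa [div_div, mul_comm] using hratio.div_const 3
  exact tendsto_test_function_norm_sq hc hδ hq
end

section
/- Let 0 < η < δ < 1 with η = O(δ^{3+β}) for some β > 0 as δ → 0. Then the Rayleigh quotient R(δ,η) = [(η/δ)(1/δ + c)²] / [c² + 1 + (η/(3δ))(1 − cδ + c²δ²)], with c = (η + 2δ)/(ηδ + 2), satisfies R(δ,η) = O(δ^β) as δ → 0⁺; in particular R(δ,η) → 0. -/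
/-!
Since `1 - x + x ^ 2 > 0`, the denominator of `R(δ, η)` is at least `1`; and `c ≤ 3 / 2 ≤ 2 / δ`.
Hence `R(δ, η) ≤ (η / δ) (3 / δ) ^ 2 = 9 η / δ ^ 3 ≤ 9 C δ ^ β`.
-/

open Real Filter Set Topology

namespace Dumbbell

noncomputable def testCoeff (δ η : ℝ) : ℝ := (η + 2 * δ) / (η * δ + 2)

noncomputable def rayleighQuotient (δ η : ℝ) : ℝ :=
  ((η / δ) * (1 / δ + testCoeff δ η) ^ 2) /
    (testCoeff δ η ^ 2 + 1 +
      (η / (3 * δ)) * (1 - testCoeff δ η * δ + testCoeff δ η ^ 2 * δ ^ 2))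

lemma one_sub_add_sq_pos (x : ℝ) : 0 < 1 - x + x ^ 2 := by
  nlinarith [sq_nonneg (x - 1 / 2)]

lemma one_le_rayleighQuotient_denom {δ η : ℝ} (hδ : 0 ≤ δ) (hη : 0 ≤ η) :
    1 ≤ testCoeff δ η ^ 2 + 1 +
      (η / (3 * δ)) * (1 - testCoeff δ η * δ + testCoeff δ η ^ 2 * δ ^ 2) := by
  have hquad := one_sub_add_sq_pos (testCoeff δ η * δ)
  rw [mul_pow] at hquad
  have : 0 ≤ (η / (3 * δ)) * (1 - testCoeff δ η * δ + testCoeff δ η ^ 2 * δ ^ 2) := by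
    positivity
  nlinarith [sq_nonneg (testCoeff δ η)]

lemma rayleighQuotient_nonneg {δ η : ℝ} (hδ : 0 ≤ δ) (hη : 0 ≤ η) :
    0 ≤ rayleighQuotient δ η :=
  div_nonneg (by positivity) (zero_le_one.trans (one_le_rayleighQuotient_denom hδ hη))

lemma testCoeff_le {δ η : ℝ} (hδ : 0 < δ) (hδ1 : δ ≤ 1) (hη : 0 ≤ η) (hηδ : η ≤ δ) :
    testCoeff δ η ≤ 2 / δ := by
  have hle : testCoeff δ η ≤ 3 / 2 := by
    rw [testCoeff, div_le_iff₀ (by positivity)]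
    nlinarith [mul_nonneg hη hδ.le]
  have : (3 : ℝ) / 2 ≤ 2 / δ := by
    rw [le_div_iff₀ hδ]
    linarith
  linarith

lemma rayleighQuotient_le {δ η : ℝ} (hδ : 0 < δ) (hδ1 : δ ≤ 1) (hη : 0 ≤ η) (hηδ : η ≤ δ) :
    rayleighQuotient δ η ≤ 9 * η / δ ^ 3 := by
  have hc : 0 ≤ testCoeff δ η := by unfold testCoeff; positivity
  have hsum : 1 / δ + testCoeff δ η ≤ 3 / δ := by
    have := testCoeff_le hδ hδ1 hη hηδ
    rw [show 3 / δ = 1 / δ + 2 / δ by ring]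
    linarith
  calc rayleighQuotient δ η ≤ (η / δ) * (1 / δ + testCoeff δ η) ^ 2 :=
        div_le_self (by positivity) (one_le_rayleighQuotient_denom hδ.le hη)
    _ ≤ (η / δ) * (3 / δ) ^ 2 := by gcongr
    _ = 9 * η / δ ^ 3 := by field_simp; ring

end Dumbbell

open Dumbbell

/-- if η = O(δ^{3+β}) with β > 0, then the Rayleigh quotient
R(δ,η) = [(η/δ)(1/δ+c)²] / [c² + 1 + (η/(3δ))(1 − cδ + c²δ²)], with
c = (η+2δ)/(ηδ+2), satisfies R = O(δ^β) as δ → 0⁺; in particular R → 0. -/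
theorem stmt17 (β : ℝ) (hβ : 0 < β) (η : ℝ → ℝ)
    (hη : ∀ δ ∈ Set.Ioo (0:ℝ) 1, 0 < η δ ∧ η δ < δ)
    (hO : ∃ C : ℝ, 0 < C ∧ ∀ᶠ δ in nhdsWithin 0 (Set.Ioi 0),
      η δ ≤ C * δ ^ (3 + β)) :
    (∃ C' : ℝ, 0 < C' ∧ ∀ᶠ δ in nhdsWithin 0 (Set.Ioi 0),
      ((η δ / δ) * (1 / δ + (η δ + 2 * δ) / (η δ * δ + 2)) ^ 2) /
        (((η δ + 2 * δ) / (η δ * δ + 2)) ^ 2 + 1 +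
          (η δ / (3 * δ)) * (1 - ((η δ + 2 * δ) / (η δ * δ + 2)) * δ +
            ((η δ + 2 * δ) / (η δ * δ + 2)) ^ 2 * δ ^ 2))
        ≤ C' * δ ^ β) ∧
    Tendsto (fun δ =>
        ((η δ / δ) * (1 / δ + (η δ + 2 * δ) / (η δ * δ + 2)) ^ 2) /
          (((η δ + 2 * δ) / (η δ * δ + 2)) ^ 2 + 1 +
            (η δ / (3 * δ)) * (1 - ((η δ + 2 * δ) / (η δ * δ + 2)) * δ +
              ((η δ + 2 * δ) / (η δ * δ + 2)) ^ 2 * δ ^ 2)))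
      (nhdsWithin 0 (Set.Ioi 0)) (nhds 0) := by
  obtain ⟨C, hC, hηC⟩ := hO
  have hbounds : ∀ᶠ δ in 𝓝[>] 0,
      0 ≤ rayleighQuotient δ (η δ) ∧ rayleighQuotient δ (η δ) ≤ 9 * C * δ ^ β := by
    filter_upwards [hηC, Ioo_mem_nhdsGT zero_lt_one] with δ hδC hδ
    obtain ⟨hη0, hηδ⟩ := hη δ hδ
    have hδ0 : 0 < δ := hδ.1
    refine ⟨rayleighQuotient_nonneg hδ0.le hη0.le, ?_⟩
    have hsplit : δ ^ (3 + β) = δ ^ (3 : ℕ) * δ ^ β := by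
      rw [rpow_add hδ0, rpow_ofNat]
    calc rayleighQuotient δ (η δ) ≤ 9 * η δ / δ ^ 3 :=
          rayleighQuotient_le hδ0 hδ.2.le hη0.le hηδ.le
      _ ≤ 9 * (C * δ ^ (3 + β)) / δ ^ 3 := by gcongr
      _ = 9 * C * δ ^ β := by rw [hsplit]; field_simp
  have hpow : Tendsto (fun δ : ℝ => 9 * C * δ ^ β) (𝓝[>] 0) (𝓝 0) := by
    have h := (continuousAt_rpow_const 0 β (Or.inr hβ.le)).tendsto.const_mul (9 * C)
    rw [zero_rpow hβ.ne', mul_zero] at h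
    exact h.mono_left nhdsWithin_le_nhds
  exact ⟨⟨9 * C, by positivity, hbounds.mono fun _ h => h.2⟩,
    squeeze_zero' (hbounds.mono fun _ h => h.1) (hbounds.mono fun _ h => h.2) hpow⟩
end
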